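/- arXiv:1307.0684 — 2 statements merged into one kernel-verified Lean document; each statement's English description precedes it below -/
import Mathlib

section
/- Let 𝓛₀₁ be the set of all Borel probability measures on ℝ with mean 0 and variance 1, let α∈(0,1), and let μ₀∈𝓛₀₁. Then the relative measure of model risk for VaR_α at μ₀ over 𝓛₀₁ satisfies RM(μ₀,𝓛₀₁) = (√((1-α)/α) − VaR_α(μ₀)) / (√((1-α)/α) + √(α/(1-α))) = (1-α) − √(α(1-α))·VaR_α(μ₀). -/
/-!
Cantelli's one-sided inequality (Markov's inequality for `(X - c)²` with the optimal shift
`c = ∓1/t`) gives `F_μ(x) ≤ 1/(1+x²)` for `x < 0` and `F_μ(x) ≥ x²/(1+x²)` for `x > 0`.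
Writing `α = b²/(1+b²)`, every `q_α(μ)` therefore lies in `[-b⁻¹, b]`, i.e. `VaR_α` ranges
in `[-b, b⁻¹]`. The two-point laws with mass `c²/(1+c²)` at `-c⁻¹` and the rest at `c` are
standard and make these bounds sharp: `c = b` gives `VaR_α = b⁻¹`, while `c < b` gives
`VaR_α = -c`, approaching `-b`. So `sup VaR_α = b⁻¹ = √((1-α)/α)`,
`inf VaR_α = -b = -√(α/(1-α))`, and the formula is algebra.
-/

open MeasureTheory Set

/-- The set of all Borel probability measures on ℝ with mean 0 and variance 1. -/
def stdMeasures : Set (Measure ℝ) :=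
  {μ | IsProbabilityMeasure μ ∧ (∫ x, x ∂μ) = 0 ∧ (∫ x, x ^ 2 ∂μ) = 1}

/-- The distribution function of a measure: `F_μ(x) = μ((-∞, x])`. -/
noncomputable def distFun (μ : Measure ℝ) (x : ℝ) : ℝ := (μ (Iic x)).toReal

/-- The lower quantile of order `α`: `q_α(μ) = inf {x : F_μ(x) ≥ α}`. -/
noncomputable def lowerQuantile (μ : Measure ℝ) (α : ℝ) : ℝ :=
  sInf {x : ℝ | α ≤ distFun μ x}

/-- The Value-at-Risk of order `α`: `VaR_α(μ) = -q_α(μ)`. -/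
noncomputable def VaR (μ : Measure ℝ) (α : ℝ) : ℝ := - lowerQuantile μ α

section Cantelli

variable {μ : Measure ℝ} [IsProbabilityMeasure μ]

lemma integral_sub_sq_of_integral_eq_zero (hX : MemLp id 2 μ) (h0 : ∫ x, x ∂μ = 0) (c : ℝ) :
    ∫ x, (x - c) ^ 2 ∂μ = ∫ x, x ^ 2 ∂μ + c ^ 2 := by
  have hsq : Integrable (fun x : ℝ => x ^ 2) μ := hX.integrable_sq
  have hlin : Integrable (fun x : ℝ => 2 * x * c) μ :=
    ((hX.integrable one_le_two).const_mul 2).mul_const c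
  have hdiff : Integrable (fun x : ℝ => x ^ 2 - 2 * x * c) μ := hsq.sub hlin
  simp_rw [sub_sq]
  rw [integral_add hdiff (integrable_const _), integral_sub hsq hlin,
    integral_mul_const, integral_const_mul, h0]
  simp

lemma measureReal_le_of_le_sq_sub (hX : MemLp id 2 μ) (h0 : ∫ x, x ∂μ = 0) {s : Set ℝ}
    {c K : ℝ} (hK : 0 < K) (hs : ∀ x ∈ s, K ≤ (x - c) ^ 2) :
    μ.real s ≤ (∫ x, x ^ 2 ∂μ + c ^ 2) / K := by
  have hmarkov := mul_meas_ge_le_integral_of_nonneg (Filter.Eventually.of_forall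
    fun x => sq_nonneg (x - c)) (hX.sub (memLp_const c)).integrable_sq K
  rw [le_div_iff₀ hK, ← integral_sub_sq_of_integral_eq_zero hX h0, mul_comm]
  exact (mul_le_mul_of_nonneg_left (measureReal_mono hs) hK.le).trans hmarkov

lemma measureReal_Iic_neg_le (hX : MemLp id 2 μ) (h0 : ∫ x, x ∂μ = 0) {t : ℝ} (ht : 0 < t) :
    μ.real (Iic (-t)) ≤ (∫ x, x ^ 2 ∂μ) / (∫ x, x ^ 2 ∂μ + t ^ 2) := by
  set v := ∫ x, x ^ 2 ∂μ
  have hv : 0 ≤ v := integral_nonneg fun x => sq_nonneg x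
  have hK : 0 < t + v / t := by positivity
  refine (measureReal_le_of_le_sq_sub hX h0 (c := v / t) (pow_pos hK 2)
    fun x hx => ?_).trans_eq ?_
  · have : x - v / t ≤ -(t + v / t) := by simp only [mem_Iic] at hx; linarith
    nlinarith
  · field_simp
    ring

lemma measureReal_Ioi_le (hX : MemLp id 2 μ) (h0 : ∫ x, x ∂μ = 0) {t : ℝ} (ht : 0 < t) :
    μ.real (Ioi t) ≤ (∫ x, x ^ 2 ∂μ) / (∫ x, x ^ 2 ∂μ + t ^ 2) := by
  set v := ∫ x, x ^ 2 ∂μ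
  have hv : 0 ≤ v := integral_nonneg fun x => sq_nonneg x
  have hK : 0 < t + v / t := by positivity
  refine (measureReal_le_of_le_sq_sub hX h0 (c := -(v / t)) (pow_pos hK 2)
    fun x hx => ?_).trans_eq ?_
  · have : t + v / t ≤ x - -(v / t) := by simp only [mem_Ioi] at hx; linarith
    nlinarith
  · field_simp
    ring

end Cantelli

section Standard

variable {μ : Measure ℝ}

lemma memLp_id_of_mem_stdMeasures (hμ : μ ∈ stdMeasures) : MemLp id 2 μ := by
  refine (memLp_two_iff_integrable_sq measurable_id.aestronglyMeasurable).2 (by_contra fun h => ?_)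
  exact zero_ne_one ((integral_undef h).symm.trans hμ.2.2)

lemma distFun_le_of_neg (hμ : μ ∈ stdMeasures) {x : ℝ} (hx : x < 0) :
    distFun μ x ≤ 1 / (1 + x ^ 2) := by
  have := hμ.1
  have h := measureReal_Iic_neg_le (memLp_id_of_mem_stdMeasures hμ) hμ.2.1 (neg_pos.2 hx)
  rwa [neg_neg, neg_sq, hμ.2.2] at h

lemma le_distFun_of_pos (hμ : μ ∈ stdMeasures) {x : ℝ} (hx : 0 < x) :
    x ^ 2 / (1 + x ^ 2) ≤ distFun μ x := by
  have := hμ.1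
  have h := measureReal_Ioi_le (memLp_id_of_mem_stdMeasures hμ) hμ.2.1 hx
  rw [hμ.2.2] at h
  have hF : distFun μ x = 1 - μ.real (Ioi x) := by
    rw [distFun, ← measureReal_def, ← compl_Ioi, probReal_compl_eq_one_sub measurableSet_Ioi]
  have hx2 : x ^ 2 / (1 + x ^ 2) = 1 - 1 / (1 + x ^ 2) := by field_simp; ring
  linarith

lemma lowerQuantile_mem_Icc (hμ : μ ∈ stdMeasures) {b : ℝ} (hb : 0 < b) :
    lowerQuantile μ (b ^ 2 / (1 + b ^ 2)) ∈ Icc (-b⁻¹) b := by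
  have hbS : b ∈ {x | b ^ 2 / (1 + b ^ 2) ≤ distFun μ x} := le_distFun_of_pos hμ hb
  have hlow : -b⁻¹ ∈ lowerBounds {x | b ^ 2 / (1 + b ^ 2) ≤ distFun μ x} := by
    intro x hx
    by_contra! hlt
    have hbx : 1 < b * -x := by
      have := mul_lt_mul_of_pos_left (lt_neg_of_lt_neg hlt) hb
      rwa [mul_inv_cancel₀ hb.ne'] at this
    have hx0 : x < 0 := by nlinarith
    have hF : 1 / (1 + x ^ 2) < b ^ 2 / (1 + b ^ 2) := by
      rw [div_lt_div_iff₀ (by positivity) (by positivity)]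
      nlinarith
    exact (distFun_le_of_neg hμ hx0).not_gt (hF.trans_le hx)
  exact ⟨le_csInf ⟨b, hbS⟩ hlow, csInf_le ⟨_, hlow⟩ hbS⟩

end Standard

noncomputable def twoPoint (p a b : ℝ) : Measure ℝ :=
  ENNReal.ofReal p • Measure.dirac a + ENNReal.ofReal (1 - p) • Measure.dirac b

section TwoPoint

variable {p a b : ℝ}

lemma isProbabilityMeasure_twoPoint (hp0 : 0 ≤ p) (hp1 : p ≤ 1) :
    IsProbabilityMeasure (twoPoint p a b) := by
  constructor
  simp only [twoPoint, Measure.add_apply, Measure.smul_apply, measure_univ, smul_eq_mul, mul_one]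
  rw [← ENNReal.ofReal_add hp0 (sub_nonneg.2 hp1), add_sub_cancel, ENNReal.ofReal_one]

lemma integral_twoPoint (hp0 : 0 ≤ p) (hp1 : p ≤ 1) (f : ℝ → ℝ) :
    ∫ x, f x ∂twoPoint p a b = p * f a + (1 - p) * f b := by
  have hia : Integrable f (Measure.dirac a) := (integrable_const (f a)).congr (ae_eq_dirac f).symm
  have hib : Integrable f (Measure.dirac b) := (integrable_const (f b)).congr (ae_eq_dirac f).symm
  rw [twoPoint, integral_add_measure (hia.smul_measure ENNReal.ofReal_ne_top)
      (hib.smul_measure ENNReal.ofReal_ne_top), integral_smul_measure, integral_smul_measure,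
    integral_dirac, integral_dirac, ENNReal.toReal_ofReal hp0,
    ENNReal.toReal_ofReal (sub_nonneg.2 hp1), smul_eq_mul, smul_eq_mul]

lemma distFun_twoPoint (hp0 : 0 ≤ p) (hp1 : p ≤ 1) (x : ℝ) :
    distFun (twoPoint p a b) x = (if a ≤ x then p else 0) + (if b ≤ x then 1 - p else 0) := by
  simp only [distFun, twoPoint, Measure.add_apply, Measure.smul_apply, smul_eq_mul,
    Measure.dirac_apply' _ measurableSet_Iic, indicator_apply, mem_Iic, Pi.one_apply]
  split_ifs <;> simp [ENNReal.toReal_add, hp0, sub_nonneg.2 hp1]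

lemma lowerQuantile_twoPoint_of_le {α : ℝ} (hα : 0 < α) (hαp : α ≤ p) (hp1 : p ≤ 1)
    (hab : a < b) : lowerQuantile (twoPoint p a b) α = a := by
  have hp0 : 0 ≤ p := hα.le.trans hαp
  have hset : {x | α ≤ distFun (twoPoint p a b) x} = Ici a := by
    ext x
    simp only [mem_ofPred_eq, mem_Ici, distFun_twoPoint hp0 hp1]
    constructor
    · intro h
      by_contra! hxa
      rw [if_neg hxa.not_ge, if_neg (hxa.trans hab).not_ge] at h
      linarith
    · intro hax
      rw [if_pos hax]
      split_ifs <;> linarith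
  rw [lowerQuantile, hset, csInf_Ici]

lemma lowerQuantile_twoPoint_of_lt {α : ℝ} (hp0 : 0 ≤ p) (hpα : p < α) (hα1 : α ≤ 1)
    (hab : a < b) : lowerQuantile (twoPoint p a b) α = b := by
  have hp1 : p ≤ 1 := hpα.le.trans hα1
  have hset : {x | α ≤ distFun (twoPoint p a b) x} = Ici b := by
    ext x
    simp only [mem_ofPred_eq, mem_Ici, distFun_twoPoint hp0 hp1]
    constructor
    · intro h
      by_contra! hxb
      rw [if_neg hxb.not_ge] at h
      split_ifs at h <;> linarith
    · intro hbx
      rw [if_pos (hab.le.trans hbx), if_pos hbx]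
      linarith
  rw [lowerQuantile, hset, csInf_Ici]

end TwoPoint

noncomputable def stdTwoPoint (c : ℝ) : Measure ℝ :=
  twoPoint (c ^ 2 / (1 + c ^ 2)) (-c⁻¹) c

section StdTwoPoint

variable {b c : ℝ}

lemma stdTwoPoint_mem_stdMeasures (hc : 0 < c) : stdTwoPoint c ∈ stdMeasures := by
  have hp0 : 0 ≤ c ^ 2 / (1 + c ^ 2) := by positivity
  have hp1 : c ^ 2 / (1 + c ^ 2) ≤ 1 := div_le_one_of_le₀ (by linarith) (by positivity)
  refine ⟨isProbabilityMeasure_twoPoint hp0 hp1, ?_, ?_⟩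
  · rw [stdTwoPoint, integral_twoPoint hp0 hp1 fun x => x]
    field_simp
    ring
  · rw [stdTwoPoint, integral_twoPoint hp0 hp1 fun x => x ^ 2]
    field_simp
    ring

lemma VaR_stdTwoPoint_of_le (hb : 0 < b) (hbc : b ≤ c) :
    VaR (stdTwoPoint c) (b ^ 2 / (1 + b ^ 2)) = c⁻¹ := by
  have hc : 0 < c := hb.trans_le hbc
  have hαp : b ^ 2 / (1 + b ^ 2) ≤ c ^ 2 / (1 + c ^ 2) := by
    rw [div_le_div_iff₀ (by positivity) (by positivity)]
    nlinarith
  rw [VaR, stdTwoPoint, lowerQuantile_twoPoint_of_le (by positivity) hαp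
    (div_le_one_of_le₀ (by linarith) (by positivity)) (by linarith [inv_pos.2 hc]), neg_neg]

lemma VaR_stdTwoPoint_of_lt (hc : 0 < c) (hcb : c < b) :
    VaR (stdTwoPoint c) (b ^ 2 / (1 + b ^ 2)) = -c := by
  have hpα : c ^ 2 / (1 + c ^ 2) < b ^ 2 / (1 + b ^ 2) := by
    rw [div_lt_div_iff₀ (by positivity) (by positivity)]
    nlinarith
  rw [VaR, stdTwoPoint, lowerQuantile_twoPoint_of_lt (by positivity) hpα
    (div_le_one_of_le₀ (by linarith) (by positivity)) (by linarith [inv_pos.2 hc])]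

end StdTwoPoint

section VaRRange

variable {b : ℝ}

lemma VaR_image_stdMeasures_subset (hb : 0 < b) :
    (fun μ => VaR μ (b ^ 2 / (1 + b ^ 2))) '' stdMeasures ⊆ Icc (-b) b⁻¹ := by
  rintro _ ⟨μ, hμ, rfl⟩
  obtain ⟨hlow, hup⟩ := lowerQuantile_mem_Icc hμ hb
  simp only [mem_Icc, VaR]
  exact ⟨neg_le_neg hup, neg_le.2 hlow⟩

lemma sSup_VaR_image_stdMeasures (hb : 0 < b) :
    sSup ((fun μ => VaR μ (b ^ 2 / (1 + b ^ 2))) '' stdMeasures) = b⁻¹ :=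
  IsGreatest.csSup_eq ⟨⟨_, stdTwoPoint_mem_stdMeasures hb, VaR_stdTwoPoint_of_le hb le_rfl⟩,
    fun _ hy => (VaR_image_stdMeasures_subset hb hy).2⟩

lemma sInf_VaR_image_stdMeasures (hb : 0 < b) :
    sInf ((fun μ => VaR μ (b ^ 2 / (1 + b ^ 2))) '' stdMeasures) = -b := by
  have hIoo : Ioo (-b) 0 ⊆ (fun μ => VaR μ (b ^ 2 / (1 + b ^ 2))) '' stdMeasures :=
    fun y ⟨hby, hy0⟩ => ⟨stdTwoPoint (-y), stdTwoPoint_mem_stdMeasures (neg_pos.2 hy0),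
      (VaR_stdTwoPoint_of_lt (neg_pos.2 hy0) (neg_lt.1 hby)).trans (neg_neg y)⟩
  exact IsGLB.csInf_eq ((isGLB_Ioo (neg_neg_of_pos hb)).of_subset_of_superset isGLB_Ici hIoo
    fun _ hy => (VaR_image_stdMeasures_subset hb hy).1)
    ((nonempty_Ioo.2 (neg_neg_of_pos hb)).mono hIoo)

end VaRRange

theorem relative_measure_VaR_std_general (α : ℝ) (hα : α ∈ Ioo (0 : ℝ) 1)
    (μ₀ : Measure ℝ) :
    (sSup ((fun μ : Measure ℝ => VaR μ α) '' stdMeasures) - VaR μ₀ α) /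
        (sSup ((fun μ : Measure ℝ => VaR μ α) '' stdMeasures) -
          sInf ((fun μ : Measure ℝ => VaR μ α) '' stdMeasures)) =
      (Real.sqrt ((1 - α) / α) - VaR μ₀ α) /
        (Real.sqrt ((1 - α) / α) + Real.sqrt (α / (1 - α))) ∧
    (sSup ((fun μ : Measure ℝ => VaR μ α) '' stdMeasures) - VaR μ₀ α) /
        (sSup ((fun μ : Measure ℝ => VaR μ α) '' stdMeasures) -
          sInf ((fun μ : Measure ℝ => VaR μ α) '' stdMeasures)) =
      (1 - α) - Real.sqrt (α * (1 - α)) * VaR μ₀ α := by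
  obtain ⟨b, hb, rfl⟩ : ∃ b > 0, α = b ^ 2 / (1 + b ^ 2) := by
    have hα' : 0 < α / (1 - α) := div_pos hα.1 (sub_pos.2 hα.2)
    refine ⟨√(α / (1 - α)), Real.sqrt_pos.2 hα', ?_⟩
    rw [Real.sq_sqrt hα'.le]
    field_simp [(sub_pos.2 hα.2).ne']
    ring
  have hA : √((1 - b ^ 2 / (1 + b ^ 2)) / (b ^ 2 / (1 + b ^ 2))) = b⁻¹ :=
    (Real.sqrt_eq_iff_mul_self_eq_of_pos (inv_pos.2 hb)).2 (by field_simp; ring)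
  have hB : √(b ^ 2 / (1 + b ^ 2) / (1 - b ^ 2 / (1 + b ^ 2))) = b :=
    (Real.sqrt_eq_iff_mul_self_eq_of_pos hb).2 (by field_simp; ring)
  have hs : √(b ^ 2 / (1 + b ^ 2) * (1 - b ^ 2 / (1 + b ^ 2))) = b / (1 + b ^ 2) :=
    (Real.sqrt_eq_iff_mul_self_eq_of_pos (by positivity)).2 (by field_simp; ring)
  rw [sSup_VaR_image_stdMeasures hb, sInf_VaR_image_stdMeasures hb, hA, hB, hs, sub_neg_eq_add]
  refine ⟨rfl, ?_⟩
  field_simp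
  ring

/-- The relative measure of model risk for `VaR_α` at `μ₀` over the class of
standard probability measures:
`RM(μ₀) = (√((1-α)/α) − VaR_α(μ₀)) / (√((1-α)/α) + √(α/(1-α)))
        = (1-α) − √(α(1-α))·VaR_α(μ₀)`. -/
theorem relative_measure_VaR_std (α : ℝ) (hα : α ∈ Ioo (0 : ℝ) 1)
    (μ₀ : Measure ℝ) (hμ₀ : μ₀ ∈ stdMeasures) :
    (sSup ((fun μ : Measure ℝ => VaR μ α) '' stdMeasures) - VaR μ₀ α) /
        (sSup ((fun μ : Measure ℝ => VaR μ α) '' stdMeasures) -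
          sInf ((fun μ : Measure ℝ => VaR μ α) '' stdMeasures)) =
      (Real.sqrt ((1 - α) / α) - VaR μ₀ α) /
        (Real.sqrt ((1 - α) / α) + Real.sqrt (α / (1 - α))) ∧
    (sSup ((fun μ : Measure ℝ => VaR μ α) '' stdMeasures) - VaR μ₀ α) /
        (sSup ((fun μ : Measure ℝ => VaR μ α) '' stdMeasures) -
          sInf ((fun μ : Measure ℝ => VaR μ α) '' stdMeasures)) =
      (1 - α) - Real.sqrt (α * (1 - α)) * VaR μ₀ α :=
  relative_measure_VaR_std_general α hα μ₀
end

section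
/- Let 𝓛₀₁ be the set of all Borel probability measures on ℝ with mean 0 and variance 1, let α∈(0,1), and let μ₀∈𝓛₀₁. Then the relative measure of model risk for ES_α at μ₀ over 𝓛₀₁ satisfies RM(μ₀,𝓛₀₁) = (√((1-α)/α) − ES_α(μ₀)) / √((1-α)/α) = 1 − √(α/(1-α))·ES_α(μ₀). -/
open MeasureTheory Set

/-- The Expected Shortfall of order `α`: `ES_α(μ) = (1/α) ∫₀^α VaR_u(μ) du`. -/
noncomputable def ES (μ : Measure ℝ) (α : ℝ) : ℝ :=
  (1 / α) * ∫ u in (0 : ℝ)..α, VaR μ u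

/-!
Unfolding the definition, `α · ES_α(μ) = -∫_{(0, α]} q` for the quantile function `q` of `μ`,
and `q` pushes Lebesgue measure on `(0, 1)` forward to `μ`. Since `q` is nondecreasing, its mean
over `(0, α]` is at most its mean over `(0, 1)`, which gives `ES_α(μ) ≥ -E X = 0`. For an upper
bound, `-q ≤ t + (-q - t)⁺` gives `α · ES_α(μ) ≤ α t + E (-X - t)⁺`, and the parabola
`(-x - t)⁺ ≤ (s - t - x)² / (4 s)` turns the right-hand side into a function of the first two
moments only; the best choice of `t` and `s` yields `ES_α(μ) ≤ √((1 - α) / α)`. Conversely, the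
standardized two-point law with atoms `-1/r` and `r` has `ES_α = (1 - α) r / α` as long as its
lower atom carries mass at most `α`, so `ES_α` takes every value in `(0, √((1 - α) / α)]`. Hence
the supremum is `√((1 - α) / α)`, the infimum is `0`, and the relative model risk is as claimed.
-/

open Filter ProbabilityTheory

section

variable {μ : Measure ℝ} {α u x : ℝ}

lemma lowerQuantile_eq_of_forall_iff {a : ℝ} (h : ∀ x, u ≤ distFun μ x ↔ a ≤ x) :
    lowerQuantile μ u = a := by
  rw [lowerQuantile, show {x | u ≤ distFun μ x} = Ici a from Set.ext h, csInf_Ici]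

lemma mul_ES (hα : 0 < α) : α * ES μ α = -∫ u in Ioc 0 α, lowerQuantile μ u := by
  rw [ES, ← mul_assoc, mul_one_div_cancel hα.ne', one_mul,
    intervalIntegral.integral_of_le hα.le, ← integral_neg]
  rfl

lemma volume_Iic_inter_Ioo_zero_one {c : ℝ} (hc : c ≤ 1) :
    volume (Iic c ∩ Ioo 0 1) = ENNReal.ofReal c := by
  refine le_antisymm ?_ ?_
  · calc volume (Iic c ∩ Ioo 0 1) ≤ volume (Ioc 0 c) := measure_mono fun u hu => ⟨hu.2.1, hu.1⟩
      _ = ENNReal.ofReal c := by rw [Real.volume_Ioc, sub_zero]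
  · calc ENNReal.ofReal c = volume (Ioo 0 c) := by rw [Real.volume_Ioo, sub_zero]
      _ ≤ volume (Iic c ∩ Ioo 0 1) :=
        measure_mono fun u hu => ⟨hu.2.le, hu.1, hu.2.trans_le hc⟩

section Quantile

variable [IsProbabilityMeasure μ]

lemma distFun_eq_cdf : distFun μ = cdf μ :=
  funext fun x => (cdf_eq_real μ x).symm

lemma le_cdf_lowerQuantile (hu : u < 1) : u ≤ cdf μ (lowerQuantile μ u) := by
  have hne : {x | u ≤ cdf μ x}.Nonempty := ((tendsto_cdf_atTop μ).eventually_const_le hu).exists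
  have hgt : ∀ x ∈ Ioi (lowerQuantile μ u), u ≤ cdf μ x := fun x hx => by
    rw [lowerQuantile, distFun_eq_cdf] at hx
    obtain ⟨y, hy, hyx⟩ := exists_lt_of_csInf_lt hne hx
    exact hy.trans (monotone_cdf μ hyx.le)
  exact ge_of_tendsto
    (((cdf μ).right_continuous _).mono_left (nhdsWithin_mono _ Ioi_subset_Ici_self))
    (eventually_nhdsWithin_of_forall hgt)

lemma lowerQuantile_le_iff (hu : u ∈ Ioo 0 1) : lowerQuantile μ u ≤ x ↔ u ≤ cdf μ x := by
  refine ⟨fun h => (le_cdf_lowerQuantile hu.2).trans (monotone_cdf μ h), fun h => ?_⟩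
  obtain ⟨x₀, hx₀⟩ := ((tendsto_cdf_atBot μ).eventually_lt_const hu.1).exists
  have hbdd : BddBelow {x | u ≤ distFun μ x} := ⟨x₀, fun y hy => by
    rw [mem_ofPred_eq, distFun_eq_cdf] at hy
    exact le_of_not_gt fun hyx => (hy.trans (monotone_cdf μ hyx.le)).not_gt hx₀⟩
  exact csInf_le hbdd (by rwa [mem_ofPred_eq, distFun_eq_cdf])

lemma monotoneOn_lowerQuantile : MonotoneOn (lowerQuantile μ) (Ioo 0 1) :=
  fun _ hu _ hv huv => (lowerQuantile_le_iff hu).2 (huv.trans ((lowerQuantile_le_iff hv).1 le_rfl))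

lemma aemeasurable_lowerQuantile : AEMeasurable (lowerQuantile μ) (volume.restrict (Ioo 0 1)) :=
  aemeasurable_restrict_of_monotoneOn measurableSet_Ioo monotoneOn_lowerQuantile

theorem map_lowerQuantile : (volume.restrict (Ioo 0 1)).map (lowerQuantile μ) = μ := by
  refine (Measure.ext_of_Iic μ _ fun x => ?_).symm
  have hpre : lowerQuantile μ ⁻¹' Iic x ∩ Ioo 0 1 = Iic (cdf μ x) ∩ Ioo 0 1 := by
    ext u
    exact ⟨fun ⟨h, hu⟩ => ⟨(lowerQuantile_le_iff hu).1 h, hu⟩,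
      fun ⟨h, hu⟩ => ⟨(lowerQuantile_le_iff hu).2 h, hu⟩⟩
  rw [Measure.map_apply_of_aemeasurable aemeasurable_lowerQuantile measurableSet_Iic,
    Measure.restrict_apply' measurableSet_Ioo, hpre,
    volume_Iic_inter_Ioo_zero_one (cdf_le_one μ x), ofReal_cdf]

lemma setIntegral_comp_lowerQuantile {f : ℝ → ℝ} (hf : AEStronglyMeasurable f μ) :
    ∫ u in Ioo 0 1, f (lowerQuantile μ u) = ∫ x, f x ∂μ := by
  rw [← integral_map aemeasurable_lowerQuantile (by rwa [map_lowerQuantile]), map_lowerQuantile]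

lemma integrableOn_comp_lowerQuantile {f : ℝ → ℝ} (hf : Integrable f μ) :
    IntegrableOn (fun u => f (lowerQuantile μ u)) (Ioo 0 1) :=
  (show Integrable f ((volume.restrict (Ioo 0 1)).map (lowerQuantile μ)) by
    rwa [map_lowerQuantile]).comp_aemeasurable aemeasurable_lowerQuantile

end Quantile

section ExpectedShortfall

variable [IsProbabilityMeasure μ]

lemma setIntegral_Ioc_le_mul_lowerQuantile (hα : α ∈ Ioo 0 1)
    (hq : IntegrableOn (lowerQuantile μ) (Ioc 0 α)) :
    ∫ u in Ioc 0 α, lowerQuantile μ u ≤ α * lowerQuantile μ α := by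
  have hle := setIntegral_mono_on hq (integrableOn_const (by simp)) measurableSet_Ioc
    fun u hu => monotoneOn_lowerQuantile (μ := μ) ⟨hu.1, hu.2.trans_lt hα.2⟩ hα hu.2
  rwa [setIntegral_const, Real.volume_real_Ioc_of_le hα.1.le, sub_zero, smul_eq_mul] at hle

lemma mul_lowerQuantile_le_setIntegral_Ioo (hα : α ∈ Ioo 0 1)
    (hq : IntegrableOn (lowerQuantile μ) (Ioo α 1)) :
    (1 - α) * lowerQuantile μ α ≤ ∫ u in Ioo α 1, lowerQuantile μ u := by
  have hle := setIntegral_mono_on (integrableOn_const (by simp)) hq measurableSet_Ioo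
    fun u hu => monotoneOn_lowerQuantile (μ := μ) hα ⟨hα.1.trans hu.1, hu.2⟩ hu.1.le
  rwa [setIntegral_const, Real.volume_real_Ioo_of_le hα.2.le, smul_eq_mul] at hle

theorem neg_integral_le_ES (hα : α ∈ Ioo 0 1) (hμ : Integrable (fun x => x) μ) :
    -∫ x, x ∂μ ≤ ES μ α := by
  have hq : IntegrableOn (lowerQuantile μ) (Ioo 0 1) := integrableOn_comp_lowerQuantile hμ
  have hleft := setIntegral_Ioc_le_mul_lowerQuantile hα
    (hq.mono_set fun u hu => ⟨hu.1, hu.2.trans_lt hα.2⟩)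
  have hright := mul_lowerQuantile_le_setIntegral_Ioo hα
    (hq.mono_set fun u hu => ⟨hα.1.trans hu.1, hu.2⟩)
  have hsplit : (∫ u in Ioc 0 α, lowerQuantile μ u) + ∫ u in Ioo α 1, lowerQuantile μ u =
      ∫ x, x ∂μ := by
    rw [← setIntegral_union (Ioc_disjoint_Ioi_same.mono_right Ioo_subset_Ioi_self) measurableSet_Ioo
      (hq.mono_set fun u hu => ⟨hu.1, hu.2.trans_lt hα.2⟩)
      (hq.mono_set fun u hu => ⟨hα.1.trans hu.1, hu.2⟩),
      Ioc_union_Ioo_eq_Ioo hα.1.le hα.2]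
    exact setIntegral_comp_lowerQuantile aestronglyMeasurable_id
  have hES := mul_ES (μ := μ) hα.1
  have : 0 ≤ α * (ES μ α + ∫ x, x ∂μ) := by
    rw [mul_add, hES, ← hsplit]
    nlinarith [mul_le_mul_of_nonneg_left hleft (sub_nonneg.2 hα.2.le),
      mul_le_mul_of_nonneg_left hright hα.1.le]
  linarith [nonneg_of_mul_nonneg_right this hα.1]

theorem mul_ES_le_add_integral_max (hα : α ∈ Ioo 0 1) (hμ : Integrable (fun x => x) μ)
    (t : ℝ) : α * ES μ α ≤ α * t + ∫ x, max (-x - t) 0 ∂μ := by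
  have hsub : Ioc 0 α ⊆ Ioo 0 1 := fun u hu => ⟨hu.1, hu.2.trans_lt hα.2⟩
  have hg : Integrable (fun x => max (-x - t) 0) μ := (hμ.neg.sub (integrable_const t)).pos_part
  have hgq := integrableOn_comp_lowerQuantile hg
  have hq : IntegrableOn (lowerQuantile μ) (Ioc 0 α) :=
    (integrableOn_comp_lowerQuantile hμ).mono_set hsub
  have hc : IntegrableOn (fun _ => t) (Ioc 0 α) := integrableOn_const (by simp)
  calc α * ES μ α = ∫ u in Ioc 0 α, -lowerQuantile μ u := by rw [mul_ES hα.1, integral_neg]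
    _ ≤ ∫ u in Ioc 0 α, (t + max (-lowerQuantile μ u - t) 0) :=
      setIntegral_mono_on hq.neg (hc.add (hgq.mono_set hsub)) measurableSet_Ioc
        fun u _ => by linarith [le_max_left (-lowerQuantile μ u - t) 0]
    _ = α * t + ∫ u in Ioc 0 α, max (-lowerQuantile μ u - t) 0 := by
      rw [integral_add hc (hgq.mono_set hsub), setIntegral_const,
        Real.volume_real_Ioc_of_le hα.1.le, sub_zero, smul_eq_mul]
    _ ≤ α * t + ∫ u in Ioo 0 1, max (-lowerQuantile μ u - t) 0 := by
      gcongr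
      exact Eventually.of_forall fun u => le_max_right (-lowerQuantile μ u - t) 0
    _ = α * t + ∫ x, max (-x - t) 0 ∂μ := by
      rw [setIntegral_comp_lowerQuantile hg.aestronglyMeasurable]

end ExpectedShortfall

section Standardized

lemma memLp_two_of_mem_stdMeasures (hμ : μ ∈ stdMeasures) : MemLp (fun x : ℝ => x) 2 μ :=
  (memLp_two_iff_integrable_sq aestronglyMeasurable_id).2
    (.of_integral_ne_zero (hμ.2.2 ▸ one_ne_zero))

lemma integrable_of_mem_stdMeasures (hμ : μ ∈ stdMeasures) : Integrable (fun x : ℝ => x) μ :=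
  have := hμ.1
  (memLp_two_of_mem_stdMeasures hμ).integrable one_le_two

lemma integral_sub_sq_of_mem_stdMeasures (hμ : μ ∈ stdMeasures) (c : ℝ) :
    ∫ x, (c - x) ^ 2 ∂μ = 1 + c ^ 2 := by
  have := hμ.1
  have h1 := (integrable_of_mem_stdMeasures hμ).const_mul (2 * c)
  have h2 := (memLp_two_of_mem_stdMeasures hμ).integrable_sq
  have h3 : Integrable (fun x => x ^ 2 - 2 * c * x) μ := h2.sub h1
  calc ∫ x, (c - x) ^ 2 ∂μ = ∫ x, (x ^ 2 - 2 * c * x + c ^ 2) ∂μ :=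
        integral_congr_ae (ae_of_all _ fun x => by ring)
    _ = (∫ x, x ^ 2 ∂μ) - 2 * c * ∫ x, x ∂μ + c ^ 2 := by
      rw [integral_add h3 (integrable_const _), integral_sub h2 h1, integral_const_mul,
        integral_const, probReal_univ, one_smul]
    _ = 1 + c ^ 2 := by rw [hμ.2.1, hμ.2.2]; ring

lemma integral_max_neg_sub_le (hμ : μ ∈ stdMeasures) (t : ℝ) {s : ℝ} (hs : 0 < s) :
    ∫ x, max (-x - t) 0 ∂μ ≤ (1 + (s - t) ^ 2) / (4 * s) := by
  have := hμ.1
  calc ∫ x, max (-x - t) 0 ∂μ ≤ ∫ x, (s - t - x) ^ 2 / (4 * s) ∂μ := by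
        refine integral_mono ((integrable_of_mem_stdMeasures hμ).neg.sub
          (integrable_const t)).pos_part
          (((memLp_const (s - t)).sub (memLp_two_of_mem_stdMeasures hμ)).integrable_sq.div_const _)
          fun x => max_le ?_ (by positivity)
        rw [le_div_iff₀ (by positivity)]
        nlinarith [sq_nonneg (-x - t - s)]
    _ = (1 + (s - t) ^ 2) / (4 * s) := by
      rw [integral_div, integral_sub_sq_of_mem_stdMeasures hμ]

theorem ES_le_sqrt_of_mem_stdMeasures (hα : α ∈ Ioo 0 1) (hμ : μ ∈ stdMeasures) :
    ES μ α ≤ √((1 - α) / α) := by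
  have := hμ.1
  set K := √((1 - α) / α)
  have hK : 0 < K := Real.sqrt_pos.2 (div_pos (sub_pos.2 hα.2) hα.1)
  have hK2 : α * (K ^ 2 + 1) = 1 := by
    rw [Real.sq_sqrt (div_pos (sub_pos.2 hα.2) hα.1).le]
    field_simp [hα.1.ne']
    ring
  -- With these `t` and `s` the parabola touches `max (-x - t) 0` at `x = -K` and `x = K⁻¹`,
  -- the two atoms of the extremal law.
  have hRU := mul_ES_le_add_integral_max hα (integrable_of_mem_stdMeasures hμ) ((K - K⁻¹) / 2)
  have hquad := integral_max_neg_sub_le hμ ((K - K⁻¹) / 2) (s := (K + K⁻¹) / 2) (by positivity)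
  have hval : α * ((K - K⁻¹) / 2) +
      (1 + ((K + K⁻¹) / 2 - (K - K⁻¹) / 2) ^ 2) / (4 * ((K + K⁻¹) / 2)) = α * K := by
    rw [show (K + K⁻¹) / 2 - (K - K⁻¹) / 2 = K⁻¹ by ring]
    field_simp
    linear_combination -4 * hK2
  exact le_of_mul_le_mul_left (by linarith) hα.1

end Standardized

section Bernoulli

open unitInterval

variable {a b : ℝ} {p : I}

lemma distFun_bernoulliMeasure (hab : a < b) (x : ℝ) :
    distFun Ber(a, b, p) x = if b ≤ x then 1 else if a ≤ x then (p : ℝ) else 0 := by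
  classical
  rw [distFun, ← measureReal_def, bernoulliMeasure_real_apply p measurableSet_Iic]
  by_cases hb : b ≤ x
  · simp [hb, hab.le.trans hb]
  · by_cases ha : a ≤ x <;> simp [ha, hb]

lemma lowerQuantile_bernoulliMeasure_of_le (hab : a < b) (hu : 0 < u) (hup : u ≤ p) :
    lowerQuantile Ber(a, b, p) u = a := by
  refine lowerQuantile_eq_of_forall_iff fun x => ?_
  rw [distFun_bernoulliMeasure hab]
  by_cases ha : a ≤ x
  · have : (p : ℝ) ≤ 1 := p.2.2
    split_ifs <;> simp only [ha, iff_true] <;> linarith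
  · have hb : ¬b ≤ x := fun hb => ha (hab.le.trans hb)
    simp [ha, hb, hu]

lemma lowerQuantile_bernoulliMeasure_of_lt (hab : a < b) (hpu : p < u) (hu : u ≤ 1) :
    lowerQuantile Ber(a, b, p) u = b := by
  refine lowerQuantile_eq_of_forall_iff fun x => ?_
  rw [distFun_bernoulliMeasure hab]
  have : (0 : ℝ) ≤ p := p.2.1
  split_ifs with hb <;> simp only [hb, iff_true, iff_false, not_le] <;> linarith

theorem mul_ES_bernoulliMeasure (hab : a < b) (hp : 0 < (p : ℝ)) (hpα : p ≤ α) (hα : α ≤ 1) :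
    α * ES Ber(a, b, p) α = -(p * a + (α - p) * b) := by
  have hA : EqOn (lowerQuantile Ber(a, b, p)) (fun _ => a) (Ioc 0 p) := fun u hu =>
    lowerQuantile_bernoulliMeasure_of_le hab hu.1 hu.2
  have hB : EqOn (lowerQuantile Ber(a, b, p)) (fun _ => b) (Ioc p α) := fun u hu =>
    lowerQuantile_bernoulliMeasure_of_lt hab hu.1 (hu.2.trans hα)
  rw [mul_ES (hp.trans_le hpα), ← Ioc_union_Ioc_eq_Ioc hp.le hpα,
    setIntegral_union (Ioc_disjoint_Ioc_of_le le_rfl) measurableSet_Ioc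
      ((integrableOn_const (by simp)).congr_fun hA.symm measurableSet_Ioc)
      ((integrableOn_const (by simp)).congr_fun hB.symm measurableSet_Ioc),
    setIntegral_congr_fun measurableSet_Ioc hA, setIntegral_congr_fun measurableSet_Ioc hB,
    setIntegral_const, setIntegral_const, Real.volume_real_Ioc_of_le hp.le,
    Real.volume_real_Ioc_of_le hpα, sub_zero, smul_eq_mul, smul_eq_mul]

/-- The two-point laws of mean `0` and variance `1`, parametrised by the upper atom `r > 0`. -/
noncomputable def stdBernoulli (r : ℝ) : Measure ℝ :=
  Ber(-r⁻¹, r, ⟨r ^ 2 / (1 + r ^ 2), div_nonneg (sq_nonneg r) (by positivity),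
    div_le_one_of_le₀ (by linarith [sq_nonneg r]) (by positivity)⟩)

lemma stdBernoulli_mem_stdMeasures {r : ℝ} (hr : 0 < r) : stdBernoulli r ∈ stdMeasures := by
  refine ⟨inferInstanceAs (IsProbabilityMeasure Ber(_, _, _)), ?_, ?_⟩ <;>
  · rw [stdBernoulli, integral_bernoulliMeasure]
    simp only [smul_eq_mul]
    field_simp
    ring

theorem ES_stdBernoulli (hα : α ∈ Ioo 0 1) {r : ℝ} (hr : 0 < r) (hrα : (1 - α) * r ^ 2 ≤ α) :
    ES (stdBernoulli r) α = (1 - α) / α * r := by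
  have hab : -r⁻¹ < r := (neg_neg_of_pos (inv_pos.2 hr)).trans hr
  apply mul_left_cancel₀ hα.1.ne'
  rw [stdBernoulli, mul_ES_bernoulliMeasure hab _ _ hα.2.le]
  · field_simp [hα.1.ne']
    ring
  · positivity
  · rw [div_le_iff₀ (by positivity)]
    linarith

end Bernoulli

lemma ES_image_stdMeasures_subset (hα : α ∈ Ioo 0 1) :
    (fun μ : Measure ℝ => ES μ α) '' stdMeasures ⊆ Icc 0 √((1 - α) / α) := by
  rintro _ ⟨μ, hμ, rfl⟩
  have := hμ.1
  refine ⟨?_, ES_le_sqrt_of_mem_stdMeasures hα hμ⟩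
  simpa [hμ.2.1] using neg_integral_le_ES hα (integrable_of_mem_stdMeasures hμ)

lemma Ioc_subset_ES_image_stdMeasures (hα : α ∈ Ioo 0 1) :
    Ioc 0 √((1 - α) / α) ⊆ (fun μ : Measure ℝ => ES μ α) '' stdMeasures := by
  rintro y ⟨hy, hyK⟩
  have h1α : 0 < 1 - α := sub_pos.2 hα.2
  have hy2 : y ^ 2 ≤ (1 - α) / α :=
    Real.sq_sqrt (div_pos h1α hα.1).le ▸ pow_le_pow_left₀ hy.le hyK 2
  refine ⟨stdBernoulli (α * y / (1 - α)),
    stdBernoulli_mem_stdMeasures (by have := hα.1; positivity), ?_⟩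
  show ES _ α = y
  rw [ES_stdBernoulli hα (by have := hα.1; positivity)]
  · field_simp [hα.1.ne']
  · rw [le_div_iff₀ hα.1] at hy2
    field_simp
    nlinarith [mul_le_mul_of_nonneg_left hy2 hα.1.le]

end

theorem relative_measure_ES_std_general (α : ℝ) (hα : α ∈ Ioo (0 : ℝ) 1)
    (μ₀ : Measure ℝ) :
    (sSup ((fun μ : Measure ℝ => ES μ α) '' stdMeasures) - ES μ₀ α) /
        (sSup ((fun μ : Measure ℝ => ES μ α) '' stdMeasures) -
          sInf ((fun μ : Measure ℝ => ES μ α) '' stdMeasures)) =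
      (Real.sqrt ((1 - α) / α) - ES μ₀ α) / Real.sqrt ((1 - α) / α) ∧
    (sSup ((fun μ : Measure ℝ => ES μ α) '' stdMeasures) - ES μ₀ α) /
        (sSup ((fun μ : Measure ℝ => ES μ α) '' stdMeasures) -
          sInf ((fun μ : Measure ℝ => ES μ α) '' stdMeasures)) =
      1 - Real.sqrt (α / (1 - α)) * ES μ₀ α := by
  set S := (fun μ : Measure ℝ => ES μ α) '' stdMeasures
  have hK : 0 < √((1 - α) / α) := Real.sqrt_pos.2 (div_pos (sub_pos.2 hα.2) hα.1)
  have hIcc := ES_image_stdMeasures_subset hα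
  have hIoc := Ioc_subset_ES_image_stdMeasures hα
  have hSup : sSup S = √((1 - α) / α) :=
    IsGreatest.csSup_eq ⟨hIoc (right_mem_Ioc.2 hK), fun y hy => (hIcc hy).2⟩
  have hInf : sInf S = 0 :=
    IsGLB.csInf_eq ⟨fun y hy => (hIcc hy).1, fun c hc => (isGLB_Ioc hK).2 fun y hy => hc (hIoc hy)⟩
      ⟨_, hIoc (right_mem_Ioc.2 hK)⟩
  have hinv : √(α / (1 - α)) = (√((1 - α) / α))⁻¹ := by
    rw [← Real.sqrt_inv, inv_div]
  rw [hSup, hInf, sub_zero, hinv, sub_div, div_self hK.ne', div_eq_inv_mul]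
  exact ⟨rfl, rfl⟩

/-- The relative measure of model risk for `ES_α` at `μ₀` over the class of
standard probability measures:
`RM(μ₀) = (√((1-α)/α) − ES_α(μ₀)) / √((1-α)/α) = 1 − √(α/(1-α))·ES_α(μ₀)`. -/
theorem relative_measure_ES_std (α : ℝ) (hα : α ∈ Ioo (0 : ℝ) 1)
    (μ₀ : Measure ℝ) (hμ₀ : μ₀ ∈ stdMeasures) :
    (sSup ((fun μ : Measure ℝ => ES μ α) '' stdMeasures) - ES μ₀ α) /
        (sSup ((fun μ : Measure ℝ => ES μ α) '' stdMeasures) -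
          sInf ((fun μ : Measure ℝ => ES μ α) '' stdMeasures)) =
      (Real.sqrt ((1 - α) / α) - ES μ₀ α) / Real.sqrt ((1 - α) / α) ∧
    (sSup ((fun μ : Measure ℝ => ES μ α) '' stdMeasures) - ES μ₀ α) /
        (sSup ((fun μ : Measure ℝ => ES μ α) '' stdMeasures) -
          sInf ((fun μ : Measure ℝ => ES μ α) '' stdMeasures)) =
      1 - Real.sqrt (α / (1 - α)) * ES μ₀ α :=
  relative_measure_ES_std_general α hα μ₀
end
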